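/- Let (V, μ, α) be a multiplicative Hom-Jordan algebra over a field F. If D₁ is an α^k-quasiderivation of V and D₂ is an α^s-quasiderivation of V (k, s ≥ 0), then α ∘ D₁ is an α^(k+1)-quasiderivation of V, and the commutator [D₁, D₂] = D₁ ∘ D₂ − D₂ ∘ D₁ is an α^(k+s)-quasiderivation of V. -/
import Mathlib


/-- `D` is an `α^k`-quasiderivation of the Hom-Jordan algebra `(V, μ, α)`. -/
def IsQDer {F V : Type*} [Field F] [AddCommGroup V] [Module F V]
    (μ : V →ₗ[F] V →ₗ[F] V) (α : V →ₗ[F] V) (k : ℕ) (D : V →ₗ[F] V) : Prop :=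
  D ∘ₗ α = α ∘ₗ D ∧ ∃ D' : V →ₗ[F] V,
    D' ∘ₗ α = α ∘ₗ D' ∧
    ∀ x y : V, μ (D x) ((α ^ k) y) + μ ((α ^ k) x) (D y) = D' (μ x y)

theorem stmt1 {F V : Type*} [Field F] [AddCommGroup V] [Module F V]
    (μ : V →ₗ[F] V →ₗ[F] V) (α : V →ₗ[F] V)
    (hcomm : ∀ x y : V, μ x y = μ y x)
    (hJ : ∀ x y : V, μ (α (α x)) (μ y (μ x x)) = μ (μ (α x) y) (α (μ x x)))
    (hmult : ∀ x y : V, α (μ x y) = μ (α x) (α y))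
    (k s : ℕ) (D₁ D₂ : V →ₗ[F] V)
    (h₁ : IsQDer μ α k D₁) (h₂ : IsQDer μ α s D₂) :
    IsQDer μ α (k + 1) (α ∘ₗ D₁) ∧
    IsQDer μ α (k + s) (D₁ ∘ₗ D₂ - D₂ ∘ₗ D₁) := by
  obtain ⟨hc1, D₁', hc1', hd1⟩ := h₁
  obtain ⟨hc2, D₂', hc2', hd2⟩ := h₂
  have hc1p : ∀ x, D₁ (α x) = α (D₁ x) := fun x => DFunLike.congr_fun hc1 x
  have hc2p : ∀ x, D₂ (α x) = α (D₂ x) := fun x => DFunLike.congr_fun hc2 x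
  -- commutation with powers
  have cp1 : ∀ n x, D₁ ((α ^ n) x) = (α ^ n) (D₁ x) := by
    intro n
    induction n with
    | zero => intro x; simp
    | succ n ih =>
      intro x
      have h1 : (α ^ (n + 1)) x = (α ^ n) (α x) := by
        rw [pow_succ]; rfl
      have h2 : (α ^ (n + 1)) (D₁ x) = (α ^ n) (α (D₁ x)) := by
        rw [pow_succ]; rfl
      rw [h1, h2, ih, hc1p]
  have cp2 : ∀ n x, D₂ ((α ^ n) x) = (α ^ n) (D₂ x) := by
    intro n
    induction n with
    | zero => intro x; simp
    | succ n ih =>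
      intro x
      have h1 : (α ^ (n + 1)) x = (α ^ n) (α x) := by
        rw [pow_succ]; rfl
      have h2 : (α ^ (n + 1)) (D₂ x) = (α ^ n) (α (D₂ x)) := by
        rw [pow_succ]; rfl
      rw [h1, h2, ih, hc2p]
  have pwks : ∀ z : V, (α ^ (k + s)) z = (α ^ k) ((α ^ s) z) := by
    intro z; rw [pow_add]; rfl
  have pwsk : ∀ z : V, (α ^ s) ((α ^ k) z) = (α ^ k) ((α ^ s) z) := by
    intro z
    have h1 : (α ^ s) ((α ^ k) z) = (α ^ (s + k)) z := by rw [pow_add]; rfl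
    rw [h1, add_comm, pwks]
  constructor
  · refine ⟨?_, α ∘ₗ D₁', ?_, ?_⟩
    · rw [LinearMap.comp_assoc, hc1]
    · rw [LinearMap.comp_assoc, hc1']
    · intro x y
      have hp : ∀ z : V, (α ^ (k + 1)) z = α ((α ^ k) z) := by
        intro z; rw [pow_succ']; rfl
      simp only [LinearMap.comp_apply, hp]
      rw [← hmult, ← hmult, ← map_add, hd1]
  · refine ⟨?_, D₁' ∘ₗ D₂' - D₂' ∘ₗ D₁', ?_, ?_⟩
    · have hc1'p : ∀ x, D₁' (α x) = α (D₁' x) := fun x => DFunLike.congr_fun hc1' x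
      have hc2'p : ∀ x, D₂' (α x) = α (D₂' x) := fun x => DFunLike.congr_fun hc2' x
      ext z
      simp only [LinearMap.sub_apply, LinearMap.comp_apply, hc1p, hc2p, map_sub]
    · have hc1'p : ∀ x, D₁' (α x) = α (D₁' x) := fun x => DFunLike.congr_fun hc1' x
      have hc2'p : ∀ x, D₂' (α x) = α (D₂' x) := fun x => DFunLike.congr_fun hc2' x
      ext z
      simp only [LinearMap.sub_apply, LinearMap.comp_apply, hc1'p, hc2'p, map_sub]
    · intro x y
      have E1 : D₁' (D₂' (μ x y)) =
          μ (D₁ (D₂ x)) ((α ^ k) ((α ^ s) y)) + μ ((α ^ k) (D₂ x)) ((α ^ s) (D₁ y))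
          + (μ ((α ^ s) (D₁ x)) ((α ^ k) (D₂ y)) + μ ((α ^ k) ((α ^ s) x)) (D₁ (D₂ y))) := by
        rw [← hd2 x y, map_add, ← hd1, ← hd1]
        simp only [cp1, cp2, pwsk]
      have E2 : D₂' (D₁' (μ x y)) =
          μ (D₂ (D₁ x)) ((α ^ k) ((α ^ s) y)) + μ ((α ^ s) (D₁ x)) ((α ^ k) (D₂ y))
          + (μ ((α ^ k) (D₂ x)) ((α ^ s) (D₁ y)) + μ ((α ^ k) ((α ^ s) x)) (D₂ (D₁ y))) := by
        rw [← hd1 x y, map_add, ← hd2, ← hd2]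
        simp only [cp1, cp2, pwsk]
      simp only [LinearMap.sub_apply, LinearMap.comp_apply, map_sub, LinearMap.sub_apply, pwks,
        E1, E2]
      abel
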